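/- arXiv:2303.16471 — 3 statements merged into one kernel-verified Lean document; each statement's English description precedes it below -/
import Mathlib

section
/- Let $0 < \alpha < 1$ and $n \in \mathbb{N}$. Then for all $x$ with $0 < |x| \leq \pi$, we have $\left|\sum_{\nu=1}^n \frac{\cos \nu x}{\nu^\alpha}\right| \leq C(\alpha) |x|^{\alpha-1}$, where the positive constant $C(\alpha)$ depends only on $\alpha$ and not on $n$ or $x$. -/
open Real Finset

/-!
Split the sum at `N = ⌊1/|x|⌋`. The terms with `ν ≤ N` are bounded trivially by `∑ ν ^ (-α)`,
which is of order `N ^ (1 - α) ≤ |x| ^ (α - 1)`. For the terms with `ν > N`, Abel summation against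
the decreasing weights `ν ^ (-α)` reduces everything to the partial sums of `cos (ν x)`, which the
Dirichlet kernel bounds by `1 / sin (|x|/2) ≤ π / |x|`; the first weight `(N + 1) ^ (-α) ≤ |x| ^ α`
again gives `|x| ^ (α - 1)`.
-/

theorem Antitone.norm_sum_range_smul_le {E : Type*} [SeminormedAddCommGroup E] [NormedSpace ℝ E]
    {f : ℕ → ℝ} {z : ℕ → E} {b : ℝ} (hf : Antitone f) (hf0 : ∀ n, 0 ≤ f n)
    (hzb : ∀ n, ‖∑ i ∈ range n, z i‖ ≤ b) (n : ℕ) :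
    ‖∑ i ∈ range n, f i • z i‖ ≤ b * f 0 := by
  have hb : 0 ≤ b := by simpa using hzb 0
  cases n with
  | zero => simpa using mul_nonneg hb (hf0 0)
  | succ m =>
    have hterm : ∀ c k, ‖c • ∑ j ∈ range k, z j‖ ≤ |c| * b := fun c k => by
      rw [norm_smul, Real.norm_eq_abs]
      exact mul_le_mul_of_nonneg_left (hzb k) (abs_nonneg c)
    rw [sum_range_by_parts, Nat.add_sub_cancel]
    calc _ ≤ ‖f m • ∑ j ∈ range (m + 1), z j‖
            + ∑ i ∈ range m, ‖(f (i + 1) - f i) • ∑ j ∈ range (i + 1), z j‖ :=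
          (norm_sub_le _ _).trans (add_le_add le_rfl (norm_sum_le _ _))
      _ ≤ |f m| * b + ∑ i ∈ range m, |f (i + 1) - f i| * b := by
          gcongr with i <;> apply hterm
      _ = b * f 0 := by
          rw [abs_of_nonneg (hf0 m)]
          simp_rw [abs_sub_comm, abs_of_nonneg (sub_nonneg.2 (hf (Nat.le_succ _)))]
          rw [← sum_mul, sum_range_sub']
          ring

theorem Real.abs_sum_range_cos_le {a : ℝ} (ha : sin (a / 2) ≠ 0) (b : ℝ) (n : ℕ) :
    |∑ i ∈ range n, cos (a * i + b)| ≤ 1 / |sin (a / 2)| := by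
  rw [le_div_iff₀ (abs_pos.2 ha), mul_comm, ← abs_mul, sin_mul_sum_cos, abs_mul]
  exact mul_le_one₀ (abs_sin_le_one _) (abs_nonneg _) (abs_cos_le_one _)

theorem Real.one_div_sin_half_le {x : ℝ} (hx0 : 0 < x) (hxπ : x ≤ π) :
    1 / sin (x / 2) ≤ π / x := by
  have hsin : 2 / π * (x / 2) ≤ sin (x / 2) := mul_le_sin (by positivity) (by linarith)
  rw [div_le_div_iff₀ (lt_of_lt_of_le (by positivity) hsin) hx0]
  calc 1 * x = π * (2 / π * (x / 2)) := by field_simp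
    _ ≤ π * sin (x / 2) := by gcongr

theorem Real.mul_rpow_sub_one_le_rpow_sub_rpow {p t : ℝ} (hp0 : 0 ≤ p) (hp1 : p ≤ 1)
    (ht : 1 ≤ t) : p * t ^ (p - 1) ≤ t ^ p - (t - 1) ^ p := by
  have ht0 : 0 < t := by linarith
  -- Bernoulli's inequality `(1 - 1/t) ^ p ≤ 1 - p / t`, multiplied by `t ^ p`
  have hbern := rpow_one_add_le_one_add_mul_self (s := -1 / t)
    (by rw [neg_div, neg_le_neg_iff, div_le_one ht0]; exact ht) hp0 hp1
  have hsplit : (t - 1) ^ p = (1 + -1 / t) ^ p * t ^ p := by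
    rw [← mul_rpow (by rw [neg_div, ← sub_eq_add_neg, sub_nonneg, div_le_one ht0]; exact ht) ht0.le]
    congr 1
    field_simp
    ring
  have hpow : t ^ p / t = t ^ (p - 1) := by rw [rpow_sub_one ht0.ne']
  rw [hsplit, ← hpow]
  have := mul_le_mul_of_nonneg_right hbern (rpow_nonneg ht0.le p)
  calc p * (t ^ p / t) = t ^ p - (1 + p * (-1 / t)) * t ^ p := by ring
    _ ≤ _ := by linarith

theorem Real.sum_Icc_natCast_rpow_neg_le {α : ℝ} (hα0 : 0 ≤ α) (hα1 : α < 1) (K : ℕ) :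
    ∑ ν ∈ Icc 1 K, (ν : ℝ) ^ (-α) ≤ (K : ℝ) ^ (1 - α) / (1 - α) := by
  have hp : 0 < 1 - α := by linarith
  induction K with
  | zero => simp [zero_rpow hp.ne']
  | succ K ih =>
    have hstep := mul_rpow_sub_one_le_rpow_sub_rpow (t := (K + 1 : ℕ)) hp.le (by linarith)
      (by simp)
    rw [sum_Icc_succ_top (by omega), le_div_iff₀ hp]
    push_cast at hstep ⊢
    rw [le_div_iff₀ hp] at ih
    rw [show (1 - α - 1) = -α by ring, add_sub_cancel_right] at hstep
    rw [add_mul]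
    linarith

theorem Real.abs_sum_Ioc_cos_mul_rpow_neg_le {α x : ℝ} (hα : 0 ≤ α) (hx0 : 0 < x) (hxπ : x ≤ π)
    (N n : ℕ) :
    |∑ ν ∈ Ioc N n, cos (ν * x) * (ν : ℝ) ^ (-α)| ≤ π / x * ((N + 1 : ℕ) : ℝ) ^ (-α) := by
  have hsin : 0 < sin (x / 2) := sin_pos_of_pos_of_lt_pi (by linarith) (by linarith)
  rw [← Ico_add_one_add_one_eq_Ioc, sum_Ico_eq_sum_range]
  have hterm : ∀ i : ℕ, cos (((N + 1 + i : ℕ) : ℝ) * x) * ((N + 1 + i : ℕ) : ℝ) ^ (-α)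
      = ((N + 1 + i : ℕ) : ℝ) ^ (-α) • cos (x * i + (N + 1 : ℕ) * x) := fun i => by
    rw [smul_eq_mul, mul_comm]; push_cast; ring_nf
  simp_rw [hterm, ← Real.norm_eq_abs]
  refine Antitone.norm_sum_range_smul_le (fun i j hij => ?_)
    (fun i => rpow_nonneg (by positivity) _) (fun k => ?_) _
  · exact rpow_le_rpow_of_nonpos (by positivity) (by gcongr) (by linarith)
  · rw [Real.norm_eq_abs]
    calc _ ≤ 1 / |sin (x / 2)| := abs_sum_range_cos_le hsin.ne' _ k
      _ ≤ π / x := by rw [abs_of_pos hsin]; exact one_div_sin_half_le hx0 hxπ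

theorem Real.abs_sum_Icc_cos_mul_rpow_neg_le_sum {α x : ℝ} (K : ℕ) :
    |∑ ν ∈ Icc 1 K, cos (ν * x) * (ν : ℝ) ^ (-α)| ≤ ∑ ν ∈ Icc 1 K, (ν : ℝ) ^ (-α) := by
  refine (abs_sum_le_sum_abs _ _).trans (sum_le_sum fun ν _ => ?_)
  rw [abs_mul, abs_of_nonneg (rpow_nonneg ν.cast_nonneg _)]
  exact mul_le_of_le_one_left (rpow_nonneg ν.cast_nonneg _) (abs_cos_le_one _)

theorem Real.abs_sum_Icc_cos_div_rpow_le {α x : ℝ} (hα0 : 0 ≤ α) (hα1 : α < 1) (hx0 : 0 < x)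
    (hxπ : x ≤ π) (n : ℕ) :
    |∑ ν ∈ Icc 1 n, cos (ν * x) / (ν : ℝ) ^ α| ≤ (π + 1 / (1 - α)) * x ^ (α - 1) := by
  have hdiv : ∀ ν : ℕ, cos (ν * x) / (ν : ℝ) ^ α = cos (ν * x) * (ν : ℝ) ^ (-α) := fun ν => by
    rw [rpow_neg ν.cast_nonneg, div_eq_mul_inv]
  simp_rw [hdiv]
  set N := ⌊1 / x⌋₊
  have head : ∀ K ≤ N,
      |∑ ν ∈ Icc 1 K, cos (ν * x) * (ν : ℝ) ^ (-α)| ≤ 1 / (1 - α) * x ^ (α - 1) := by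
    intro K hK
    have hK' : (K : ℝ) ≤ 1 / x := (Nat.cast_le.2 hK).trans (Nat.floor_le (by positivity))
    calc _ ≤ (K : ℝ) ^ (1 - α) / (1 - α) :=
          (abs_sum_Icc_cos_mul_rpow_neg_le_sum K).trans (sum_Icc_natCast_rpow_neg_le hα0 hα1 K)
      _ ≤ (1 / x) ^ (1 - α) / (1 - α) := by gcongr
      _ = 1 / (1 - α) * x ^ (α - 1) := by
          rw [one_div x, inv_rpow hx0.le, ← rpow_neg hx0.le, neg_sub]; ring
  have tail : π / x * ((N + 1 : ℕ) : ℝ) ^ (-α) ≤ π * x ^ (α - 1) := by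
    have hN : 1 / x ≤ ((N + 1 : ℕ) : ℝ) := by push_cast; exact (Nat.lt_floor_add_one _).le
    calc _ ≤ π / x * (1 / x) ^ (-α) := mul_le_mul_of_nonneg_left
          (rpow_le_rpow_of_nonpos (by positivity) hN (by linarith)) (by positivity)
      _ = π * x ^ (α - 1) := by
          rw [one_div x, inv_rpow hx0.le, rpow_neg hx0.le, inv_inv, rpow_sub_one hx0.ne']; ring
  have hπ : 0 ≤ π * x ^ (α - 1) := by positivity
  rcases le_or_gt n N with hn | hn
  · linarith [head n hn]
  · have hIoc : ∀ k, Icc 1 k = Ioc 0 k := Icc_add_one_left_eq_Ioc 0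
    rw [hIoc, ← sum_Ioc_consecutive _ (Nat.zero_le N) hn.le, ← hIoc]
    calc _ ≤ _ := abs_add_le _ _
      _ ≤ 1 / (1 - α) * x ^ (α - 1) + π * x ^ (α - 1) :=
          add_le_add (head N le_rfl) ((abs_sum_Ioc_cos_mul_rpow_neg_le hα0 hx0 hxπ N n).trans tail)
      _ = _ := by ring

theorem cos_kernel_bound (α : ℝ) (hα0 : 0 < α) (hα1 : α < 1) :
    ∃ C : ℝ, 0 < C ∧ ∀ (n : ℕ) (x : ℝ), 0 < |x| → |x| ≤ π →
      |∑ ν ∈ Finset.Icc 1 n, Real.cos (ν * x) / (ν : ℝ) ^ α| ≤ C * |x| ^ (α - 1) := by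
  have hp : 0 < 1 - α := by linarith
  refine ⟨π + 1 / (1 - α), by positivity, fun n x hx0 hxπ => ?_⟩
  have hcos : ∀ ν : ℕ, cos (ν * x) = cos (ν * |x|) := fun ν => by
    rw [← cos_abs (ν * x), abs_mul, Nat.abs_cast]
  simp_rw [hcos]
  exact abs_sum_Icc_cos_div_rpow_le hα0.le hα1 hx0 hxπ n
end

section
/- Let $0 < \alpha < 1$ and $n \in \mathbb{N}$. Then for all $x$ with $0 < |x| \leq \pi$, we have $\left|\sum_{\nu=1}^n \frac{\sin \nu x}{\nu^\alpha}\right| \leq C(\alpha) |x|^{\alpha-1}$, where the positive constant $C(\alpha)$ depends only on $\alpha$ and not on $n$ or $x$. -/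
/-!
Split the sum at `N = ⌊1/x⌋`. For `ν ≤ N` use `|sin (ν x)| ≤ ν x`, which makes each term at most
`x ^ α`, and there are at most `1/x` of them. For `ν > N`, Abel summation against the decreasing
weights `ν ^ (-α)` reduces the tail to the Dirichlet kernel bound `|∑_{i<k} sin (i x)| ≤ π / x`,
with `(N + 1) ^ (-α) ≤ x ^ α`. Both parts are `O(x ^ (α - 1))`; negative `x` follows by oddness.
-/

open Real Finset

section AbelSummation

variable {E : Type*} [SeminormedAddCommGroup E] [NormedSpace ℝ E]
  {f : ℕ → ℝ} {g : ℕ → E} {m : ℕ} {M : ℝ}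

theorem norm_sum_Ico_smul_sub_boundary_le (hf : AntitoneOn f (Set.Ici m))
    (hg : ∀ k, ‖∑ i ∈ range k, g i‖ ≤ M) {n : ℕ} (hmn : m ≤ n) :
    ‖∑ i ∈ Ico m n, f i • g i - f n • ∑ i ∈ range n, g i + f m • ∑ i ∈ range m, g i‖
      ≤ M * (f m - f n) := by
  induction n, hmn using Nat.le_induction with
  | base => simp
  | succ n hmn ih =>
    have hstep : f (n + 1) ≤ f n := hf hmn (le_trans hmn n.le_succ) n.le_succ
    calc ‖∑ i ∈ Ico m (n + 1), f i • g i - f (n + 1) • ∑ i ∈ range (n + 1), g i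
            + f m • ∑ i ∈ range m, g i‖
        = ‖(∑ i ∈ Ico m n, f i • g i - f n • ∑ i ∈ range n, g i + f m • ∑ i ∈ range m, g i)
            + (f n - f (n + 1)) • ∑ i ∈ range (n + 1), g i‖ := by
          rw [sum_Ico_succ_top hmn, sum_range_succ]
          congr 1
          module
      _ ≤ M * (f m - f n) + (f n - f (n + 1)) * M := by
          grw [norm_add_le, ih, norm_smul, Real.norm_of_nonneg (sub_nonneg.2 hstep), hg]
          exact sub_nonneg.2 hstep
      _ = M * (f m - f (n + 1)) := by ring

theorem norm_sum_Ico_smul_le_of_antitoneOn (hf : AntitoneOn f (Set.Ici m))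
    (hf0 : ∀ i, m ≤ i → 0 ≤ f i) (hg : ∀ k, ‖∑ i ∈ range k, g i‖ ≤ M) {n : ℕ}
    (hmn : m ≤ n) :
    ‖∑ i ∈ Ico m n, f i • g i‖ ≤ 2 * M * f m := by
  have boundary : ∀ k, m ≤ k → ‖f k • ∑ i ∈ range k, g i‖ ≤ f k * M := fun k hk => by
    rw [norm_smul, Real.norm_of_nonneg (hf0 k hk)]
    exact mul_le_mul_of_nonneg_left (hg k) (hf0 k hk)
  calc ‖∑ i ∈ Ico m n, f i • g i‖
      = ‖(∑ i ∈ Ico m n, f i • g i - f n • ∑ i ∈ range n, g i + f m • ∑ i ∈ range m, g i)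
          + f n • ∑ i ∈ range n, g i - f m • ∑ i ∈ range m, g i‖ := by
        congr 1; abel
    _ ≤ M * (f m - f n) + f n * M + f m * M := by
        grw [norm_sub_le, norm_add_le, norm_sum_Ico_smul_sub_boundary_le hf hg hmn,
          boundary n hmn, boundary m le_rfl]
    _ = 2 * M * f m := by ring

end AbelSummation

theorem norm_geom_sum_le_of_norm_eq_one {K : Type*} [NormedDivisionRing K] {z : K}
    (hz : ‖z‖ = 1) (hz1 : z ≠ 1) (k : ℕ) :
    ‖∑ i ∈ range k, z ^ i‖ ≤ 2 / ‖z - 1‖ := by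
  rw [geom_sum_eq hz1, norm_div]
  gcongr
  calc ‖z ^ k - 1‖ ≤ ‖z ^ k‖ + ‖(1 : K)‖ := norm_sub_le _ _
    _ = 2 := by rw [norm_pow, hz, one_pow, norm_one]; norm_num

theorem two_mul_div_pi_le_norm_exp_I_mul_sub_one {x : ℝ} (hx0 : 0 ≤ x) (hxπ : x ≤ π) :
    2 * x / π ≤ ‖Complex.exp (Complex.I * x) - 1‖ := by
  have hsin : 0 ≤ sin (x / 2) := sin_nonneg_of_nonneg_of_le_pi (by positivity) (by linarith)
  rw [Complex.norm_exp_I_mul_ofReal_sub_one, Real.norm_of_nonneg (by positivity)]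
  calc 2 * x / π = 2 * (2 / π * (x / 2)) := by ring
    _ ≤ 2 * sin (x / 2) := by gcongr; exact mul_le_sin (by positivity) (by linarith)

theorem abs_sum_range_sin_mul_le {x : ℝ} (hx0 : 0 < x) (hxπ : x ≤ π) (k : ℕ) :
    |∑ i ∈ range k, sin (i * x)| ≤ π / x := by
  set z := Complex.exp (Complex.I * x)
  have hdist : 2 * x / π ≤ ‖z - 1‖ := two_mul_div_pi_le_norm_exp_I_mul_sub_one hx0.le hxπ
  have hpos : 0 < 2 * x / π := by positivity
  have hz1 : z ≠ 1 := fun h => by rw [h, sub_self, norm_zero] at hdist; linarith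
  have him : ∑ i ∈ range k, sin (i * x) = (∑ i ∈ range k, z ^ i).im := by
    rw [Complex.im_sum]
    refine sum_congr rfl fun i _ => ?_
    rw [← Complex.exp_nat_mul, show (i : ℂ) * (Complex.I * x) = ((i * x : ℝ) : ℂ) * Complex.I by
      push_cast; ring, Complex.exp_ofReal_mul_I_im]
  have hgeom := norm_geom_sum_le_of_norm_eq_one (Complex.norm_exp_I_mul_ofReal x) hz1 k
  calc |∑ i ∈ range k, sin (i * x)| ≤ ‖∑ i ∈ range k, z ^ i‖ := him ▸ Complex.abs_im_le_norm _
    _ ≤ 2 / (2 * x / π) := hgeom.trans (by gcongr)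
    _ = π / x := by field_simp

section SinSum

variable {α x : ℝ}

theorem abs_sin_mul_div_rpow_le {t : ℝ} (hα1 : α ≤ 1) (hx : 0 ≤ x) (ht : 0 < t)
    (htx : t * x ≤ 1) :
    |sin (t * x) / t ^ α| ≤ x ^ α := by
  have htx0 : 0 ≤ t * x := by positivity
  rw [abs_div, abs_of_pos (rpow_pos_of_pos ht α)]
  calc |sin (t * x)| / t ^ α ≤ t * x / t ^ α := by
        gcongr
        exact (abs_sin_le_abs).trans (abs_of_nonneg htx0).le
    _ = x ^ α * (t * x) ^ (1 - α) := by
        rw [mul_rpow ht.le hx, rpow_sub ht, rpow_one, mul_left_comm,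
          ← rpow_add' hx (by norm_num), add_sub_cancel, rpow_one]
        ring
    _ ≤ x ^ α * 1 := by gcongr; exact rpow_le_one htx0 htx (by linarith)
    _ = x ^ α := mul_one _

theorem abs_sum_Icc_sin_mul_div_rpow_le_of_mul_le_one (hα1 : α ≤ 1) (hx : 0 < x) {m : ℕ}
    (hm : m * x ≤ 1) :
    |∑ ν ∈ Icc 1 m, sin (ν * x) / (ν : ℝ) ^ α| ≤ x ^ (α - 1) := by
  have hterm : ∀ ν ∈ Icc 1 m, |sin (ν * x) / (ν : ℝ) ^ α| ≤ x ^ α := fun ν hν => by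
    obtain ⟨h1, h2⟩ := mem_Icc.1 hν
    exact abs_sin_mul_div_rpow_le hα1 hx.le (by exact_mod_cast h1)
      ((mul_le_mul_of_nonneg_right (by exact_mod_cast h2) hx.le).trans hm)
  calc |∑ ν ∈ Icc 1 m, sin (ν * x) / (ν : ℝ) ^ α|
      ≤ ∑ ν ∈ Icc 1 m, |sin (ν * x) / (ν : ℝ) ^ α| := abs_sum_le_sum_abs _ _
    _ ≤ m * x ^ α := by simpa using sum_le_card_nsmul _ _ _ hterm
    _ = (m * x) * x ^ (α - 1) := by rw [rpow_sub_one hx.ne']; field_simp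
    _ ≤ x ^ (α - 1) := by grw [hm, one_mul]

theorem abs_sum_Ico_sin_mul_div_rpow_le (hα0 : 0 ≤ α) (hx : 0 < x) (hxπ : x ≤ π) {m n : ℕ}
    (hm : 1 ≤ m * x) (hmn : m ≤ n) :
    |∑ ν ∈ Ico m n, sin (ν * x) / (ν : ℝ) ^ α| ≤ 2 * π * x ^ (α - 1) := by
  have hm0 : (0 : ℝ) < m := pos_of_mul_pos_left (by linarith) hx.le
  have hanti : AntitoneOn (fun ν : ℕ => (ν : ℝ) ^ (-α)) (Set.Ici m) := fun i hi j _ hij =>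
    rpow_le_rpow_of_nonpos (hm0.trans_le (by exact_mod_cast hi)) (by exact_mod_cast hij)
      (by linarith)
  have hweight : (m : ℝ) ^ (-α) ≤ x ^ α := by
    rw [rpow_neg hm0.le, ← inv_rpow hm0.le]
    exact rpow_le_rpow (by positivity) (inv_le_of_inv_le₀ hx (by rwa [← one_div, div_le_iff₀ hx]))
      hα0
  have habel := norm_sum_Ico_smul_le_of_antitoneOn (g := fun i : ℕ => sin (i * x)) hanti
    (fun i _ => by positivity) (abs_sum_range_sin_mul_le hx hxπ) hmn
  calc |∑ ν ∈ Ico m n, sin (ν * x) / (ν : ℝ) ^ α|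
      = ‖∑ ν ∈ Ico m n, (ν : ℝ) ^ (-α) • sin (ν * x)‖ := by
        rw [Real.norm_eq_abs]
        congr 1
        refine sum_congr rfl fun ν _ => ?_
        rw [rpow_neg ν.cast_nonneg, smul_eq_mul, div_eq_inv_mul]
    _ ≤ 2 * (π / x) * (m : ℝ) ^ (-α) := habel
    _ ≤ 2 * (π / x) * x ^ α := by gcongr
    _ = 2 * π * x ^ (α - 1) := by rw [rpow_sub_one hx.ne']; ring

theorem abs_sum_Icc_sin_mul_div_rpow_le (hα0 : 0 ≤ α) (hα1 : α ≤ 1) (hx : 0 < x) (hxπ : x ≤ π)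
    (n : ℕ) :
    |∑ ν ∈ Icc 1 n, sin (ν * x) / (ν : ℝ) ^ α| ≤ (1 + 2 * π) * x ^ (α - 1) := by
  set N := ⌊x⁻¹⌋₊
  have hN : (N : ℝ) * x ≤ 1 := by
    rw [← le_div_iff₀ hx, one_div]; exact Nat.floor_le (by positivity)
  have hN1 : 1 ≤ ((N + 1 : ℕ) : ℝ) * x := by
    rw [← div_le_iff₀ hx, one_div]; exact_mod_cast (Nat.lt_floor_add_one _).le
  have hpow : 0 ≤ x ^ (α - 1) := by positivity
  rcases le_or_gt n N with hnN | hNn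
  · calc |∑ ν ∈ Icc 1 n, sin (ν * x) / (ν : ℝ) ^ α| ≤ x ^ (α - 1) :=
          abs_sum_Icc_sin_mul_div_rpow_le_of_mul_le_one hα1 hx
            ((mul_le_mul_of_nonneg_right (by exact_mod_cast hnN) hx.le).trans hN)
      _ ≤ (1 + 2 * π) * x ^ (α - 1) := le_mul_of_one_le_left hpow (by linarith [pi_pos])
  · rw [← Ico_add_one_right_eq_Icc, ← sum_Ico_consecutive _ (by omega : 1 ≤ N + 1)
      (by omega : N + 1 ≤ n + 1), Ico_add_one_right_eq_Icc]
    calc _ ≤ _ := abs_add_le _ _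
      _ ≤ x ^ (α - 1) + 2 * π * x ^ (α - 1) :=
          add_le_add (abs_sum_Icc_sin_mul_div_rpow_le_of_mul_le_one hα1 hx hN)
            (abs_sum_Ico_sin_mul_div_rpow_le hα0 hx hxπ hN1 (by omega))
      _ = (1 + 2 * π) * x ^ (α - 1) := by ring

end SinSum

theorem abs_sum_sin_mul_abs_div (s : Finset ℕ) (c : ℕ → ℝ) (x : ℝ) :
    |∑ ν ∈ s, sin (ν * |x|) / c ν| = |∑ ν ∈ s, sin (ν * x) / c ν| := by
  rcases abs_cases x with ⟨h, _⟩ | ⟨h, _⟩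
  · rw [h]
  · simp only [h, mul_neg, sin_neg, neg_div, sum_neg_distrib, abs_neg]

theorem sin_kernel_bound (α : ℝ) (hα0 : 0 < α) (hα1 : α < 1) :
    ∃ C : ℝ, 0 < C ∧ ∀ (n : ℕ) (x : ℝ), 0 < |x| → |x| ≤ π →
      |∑ ν ∈ Finset.Icc 1 n, Real.sin (ν * x) / (ν : ℝ) ^ α| ≤ C * |x| ^ (α - 1) := by
  refine ⟨1 + 2 * π, by positivity, fun n x hx hxπ => ?_⟩
  rw [← abs_sum_sin_mul_abs_div _ (fun ν : ℕ => (ν : ℝ) ^ α)]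
  exact abs_sum_Icc_sin_mul_div_rpow_le hα0.le hα1.le hx hxπ n
end

section
/- Let $f(x) = \sin x_1 \sin x_2$ be a function of two variables, each $2\pi$-periodic, and let $r_1, r_2 > 0$, $1 \leq p_1, p_2 \leq \infty$. Then for all $\delta_1, \delta_2 \in (0,1)$, the mixed modulus of smoothness satisfies $\omega_{r_1, r_2}(f, \delta_1, \delta_2)_{p_1 p_2} \asymp \delta_1^{r_1} \delta_2^{r_2}$, i.e., there exist positive constants $c, C$ (independent of $\delta_1, \delta_2$) with $c\,\delta_1^{r_1}\delta_2^{r_2} \leq \omega_{r_1,r_2}(f,\delta_1,\delta_2)_{p_1p_2} \leq C\,\delta_1^{r_1}\delta_2^{r_2}$. -/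
open MeasureTheory Real ENNReal

/-!
Both differences act on `sin x₁ sin x₂` one variable at a time, so the mixed norm of
`Δ^{r₁}_{h₁,1} Δ^{r₂}_{h₂,2} f` factors as `‖Δ^{r₁}_{h₁} sin‖_{p₁} ‖Δ^{r₂}_{h₂} sin‖_{p₂}`.
In one variable, the binomial series gives `Δ^α_h sin y = Im (e^{iy} W)` with
`W = e^{iαh} (1 - e^{-ih})^α`; the series converges on the whole unit circle because
`∑ |(α choose n)| < ∞` for `α > 0`, and its value there follows by Abel continuity.
Hence `Δ^α_h sin` is a sinusoid of amplitude `|W| = |1 - e^{-ih}|^α`, which lies between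
`(2h/π)^α` and `|h|^α`. On a period, the `L^p` norm of a sinusoid of amplitude `A` is at most
`(2π)^{1/p} A` (sup bound), and at least `π A / (2π)^{1 - 1/p}` by Hölder and
`A ∫ |g| ≥ ∫ g² = π A²`.
-/

/-- Generalized binomial coefficient `α choose ν`. -/
noncomputable def gbinom (α : ℝ) (ν : ℕ) : ℝ :=
  (∏ i ∈ Finset.range ν, (α - i)) / (Nat.factorial ν)

/-- Fractional difference of order `α` with step `h` in the first variable. -/
noncomputable def fracDiff1 (α h : ℝ) (f : ℝ → ℝ → ℝ) : ℝ → ℝ → ℝ :=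
  fun x₁ x₂ => ∑' ν : ℕ, (-1 : ℝ) ^ ν * gbinom α ν * f (x₁ + (α - ν) * h) x₂

/-- Fractional difference of order `α` with step `h` in the second variable. -/
noncomputable def fracDiff2 (α h : ℝ) (f : ℝ → ℝ → ℝ) : ℝ → ℝ → ℝ :=
  fun x₁ x₂ => ∑' ν : ℕ, (-1 : ℝ) ^ ν * gbinom α ν * f x₁ (x₂ + (α - ν) * h)

/-- Mixed Lebesgue norm `‖f‖_{p₁ p₂}` over the square of periods. -/
noncomputable def mixedNorm (p₁ p₂ : ℝ≥0∞) (f : ℝ → ℝ → ℝ) : ℝ≥0∞ :=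
  eLpNorm
    (fun x₂ => (eLpNorm (fun x₁ => f x₁ x₂) p₁
      (volume.restrict (Set.Ioc 0 (2 * π)))).toReal) p₂
    (volume.restrict (Set.Ioc 0 (2 * π)))

/-- Mixed modulus of smoothness of orders `α₁, α₂` in the mixed `(p₁,p₂)` metric. -/
noncomputable def mixedModulus (α₁ α₂ : ℝ) (f : ℝ → ℝ → ℝ) (δ₁ δ₂ : ℝ)
    (p₁ p₂ : ℝ≥0∞) : ℝ≥0∞ :=
  ⨆ (h₁ : ℝ) (_ : |h₁| ≤ δ₁) (h₂ : ℝ) (_ : |h₂| ≤ δ₂),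
    mixedNorm p₁ p₂ (fracDiff1 α₁ h₁ (fracDiff2 α₂ h₂ f))

open Topology Filter

lemma gbinom_zero (α : ℝ) : gbinom α 0 = 1 := by simp [gbinom]

lemma gbinom_succ (α : ℝ) (n : ℕ) : gbinom α (n + 1) = gbinom α n * (α - n) / (n + 1) := by
  simp only [gbinom, Finset.prod_range_succ, Nat.factorial_succ]
  push_cast
  field_simp

lemma gbinom_eq_choose (α : ℝ) (n : ℕ) : gbinom α n = Ring.choose α n := by
  rw [Ring.choose_eq_smul, gbinom, smul_eq_mul, div_eq_inv_mul, ← descPochhammer_eval_eq_prod_range,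
    ← Polynomial.aeval_eq_smeval, Polynomial.aeval_def, ← Polynomial.eval_map, descPochhammer_map]

lemma gbinom_succ_succ (α : ℝ) (n : ℕ) :
    gbinom α (n + 1) = gbinom (α - 1) n + gbinom (α - 1) (n + 1) := by
  simpa [gbinom_eq_choose] using Ring.choose_succ_succ (α - 1) n

lemma sum_range_succ_neg_one_pow_mul_gbinom (α : ℝ) (N : ℕ) :
    ∑ n ∈ Finset.range (N + 1), (-1) ^ n * gbinom α n = (-1) ^ N * gbinom (α - 1) N := by
  induction N with
  | zero => simp [gbinom_zero]
  | succ N ih => rw [Finset.sum_range_succ, ih, gbinom_succ_succ]; ring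

lemma abs_gbinom_le_one {β : ℝ} (h₁ : -1 ≤ β) (h₂ : β ≤ 0) (n : ℕ) : |gbinom β n| ≤ 1 := by
  induction n with
  | zero => simp [gbinom_zero]
  | succ n ih =>
    have hn : (0 : ℝ) < n + 1 := by positivity
    rw [gbinom_succ, abs_div, abs_mul, abs_of_pos hn, div_le_one hn]
    have : |β - n| ≤ n + 1 := abs_le.2 ⟨by linarith, by linarith [n.cast_nonneg (α := ℝ)]⟩
    nlinarith [abs_nonneg (gbinom β n), abs_nonneg (β - n)]

lemma neg_one_pow_mul_gbinom_succ_nonneg {α : ℝ} (h₀ : 0 ≤ α) (h₁ : α ≤ 1) (n : ℕ) :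
    0 ≤ (-1) ^ n * gbinom α (n + 1) := by
  induction n with
  | zero => simpa [gbinom_succ, gbinom_zero] using h₀
  | succ n ih =>
    have key : (-1) ^ (n + 1) * gbinom α (n + 1 + 1)
        = (-1) ^ n * gbinom α (n + 1) * ((n + 1 - α) / (n + 2)) := by
      rw [gbinom_succ]; push_cast; field_simp; ring
    rw [key]
    exact mul_nonneg ih (div_nonneg (by linarith) (by positivity))

/- For `0 ≤ α ≤ 1` the coefficients `gbinom α (n + 1)` alternate in sign, so the partial sums of
their absolute values are alternating partial sums of `gbinom α`, which stay below `2`. -/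
lemma summable_abs_gbinom_of_le_one {α : ℝ} (h₀ : 0 ≤ α) (h₁ : α ≤ 1) :
    Summable fun n => |gbinom α n| := by
  rw [← summable_nat_add_iff 1]
  refine summable_of_sum_range_le (c := 2) (fun _ => abs_nonneg _) fun N => ?_
  have habs : ∀ n, |gbinom α (n + 1)| = (-1) ^ n * gbinom α (n + 1) := fun n => by
    rw [← abs_of_nonneg (neg_one_pow_mul_gbinom_succ_nonneg h₀ h₁ n), abs_mul, abs_neg_one_pow,
      one_mul]
  have htail : ∑ n ∈ Finset.range N, |gbinom α (n + 1)| = 1 - (-1) ^ N * gbinom (α - 1) N := by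
    have h := sum_range_succ_neg_one_pow_mul_gbinom α N
    rw [Finset.sum_range_succ', gbinom_zero] at h
    simp only [habs]
    have : ∑ n ∈ Finset.range N, (-1 : ℝ) ^ (n + 1) * gbinom α (n + 1)
        = -∑ n ∈ Finset.range N, (-1) ^ n * gbinom α (n + 1) := by
      rw [← Finset.sum_neg_distrib]; exact Finset.sum_congr rfl fun n _ => by ring
    linarith
  have hbound := abs_gbinom_le_one (β := α - 1) (by linarith) (by linarith) N
  have hsign : |(-1) ^ N * gbinom (α - 1) N| = |gbinom (α - 1) N| := by
    rw [abs_mul, abs_neg_one_pow, one_mul]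
  rw [htail]
  linarith [neg_abs_le ((-1) ^ N * gbinom (α - 1) N)]

lemma summable_abs_gbinom {α : ℝ} (hα : 0 ≤ α) : Summable fun n => |gbinom α n| := by
  obtain ⟨k, hk⟩ : ∃ k : ℕ, α ≤ k + 1 := ⟨⌈α⌉₊, by linarith [Nat.le_ceil α]⟩
  induction k generalizing α with
  | zero => exact summable_abs_gbinom_of_le_one hα (by simpa using hk)
  | succ k ih =>
    rcases le_or_gt α 1 with h₁ | h₁
    · exact summable_abs_gbinom_of_le_one hα h₁
    have hprev := ih (α := α - 1) (by linarith) (by push_cast at hk; linarith)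
    rw [← summable_nat_add_iff 1]
    refine ((summable_nat_add_iff 1).2 hprev |>.add hprev).of_nonneg_of_le (fun _ => abs_nonneg _)
      fun n => ?_
    rw [gbinom_succ_succ, add_comm (gbinom _ n)]
    exact abs_add_le _ _

lemma hasSum_gbinom_mul_pow_of_norm_lt_one (α : ℝ) {z : ℂ} (hz : ‖z‖ < 1) :
    HasSum (fun n => (gbinom α n : ℂ) * z ^ n) ((1 + z) ^ (α : ℂ)) := by
  have h := Complex.one_add_cpow_hasFPowerSeriesOnBall_zero (a := α) |>.hasSum (y := z)
    (by rwa [Metric.mem_eball, edist_zero_right, ← ofReal_norm, ENNReal.ofReal_lt_one])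
  simpa [binomialSeries, FormalMultilinearSeries.coeff_ofScalars, gbinom_eq_choose,
    Complex.ofReal_choose, mul_comm] using h

lemma hasSum_gbinom_mul_pow {α : ℝ} (hα : 0 < α) {z : ℂ} (hz : ‖z‖ ≤ 1) :
    HasSum (fun n => (gbinom α n : ℂ) * z ^ n) ((1 + z) ^ (α : ℂ)) := by
  have hbound : ∀ n, ∀ t ∈ Set.Icc (0 : ℝ) 1, ‖(gbinom α n : ℂ) * (t * z) ^ n‖ ≤ |gbinom α n| := by
    intro n t ht
    rw [norm_mul, Complex.norm_real, Real.norm_eq_abs, norm_pow]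
    refine mul_le_of_le_one_right (abs_nonneg _) (pow_le_one₀ (norm_nonneg _) ?_)
    rw [norm_mul, Complex.norm_real, Real.norm_of_nonneg ht.1]
    exact mul_le_one₀ ht.2 (norm_nonneg _) hz
  set S : ℝ → ℂ := fun t => ∑' n, (gbinom α n : ℂ) * (t * z) ^ n
  have hS : ContinuousOn S (Set.Icc 0 1) :=
    continuousOn_tsum (fun n => by fun_prop) (summable_abs_gbinom hα.le) hbound
  have hS_left : Tendsto S (𝓝[<] 1) (𝓝 (S 1)) :=
    (hS 1 ⟨zero_le_one, le_rfl⟩).tendsto.mono_left <| nhdsWithin_le_of_mem <|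
      mem_of_superset (Ioo_mem_nhdsLT zero_lt_one) Set.Ioo_subset_Icc_self
  have hcpow : ContinuousAt (fun t : ℝ => (1 + t * z) ^ (α : ℂ)) 1 := by
    refine ContinuousAt.comp (g := fun w : ℂ => w ^ (α : ℂ)) ?_ (by fun_prop)
    refine Complex.continuousAt_cpow_const_of_re_pos (Or.inl ?_) (by simpa using hα)
    simp only [Complex.ofReal_one, one_mul, Complex.add_re, Complex.one_re]
    linarith [neg_le_of_abs_le ((Complex.abs_re_le_norm z).trans hz)]
  have hAbel : Tendsto S (𝓝[<] 1) (𝓝 ((1 + z) ^ (α : ℂ))) := by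
    have h := hcpow.tendsto.mono_left (nhdsWithin_le_nhds (s := Set.Iio 1))
    simp only [Complex.ofReal_one, one_mul] at h
    refine h.congr' ?_
    filter_upwards [Ioo_mem_nhdsLT zero_lt_one] with t ht
    refine (hasSum_gbinom_mul_pow_of_norm_lt_one α ?_).tsum_eq.symm
    rw [norm_mul, Complex.norm_real, Real.norm_of_nonneg ht.1.le]
    exact mul_lt_one_of_nonneg_of_lt_one_left ht.1.le ht.2 hz
  have hsum : Summable fun n => (gbinom α n : ℂ) * z ^ n :=
    .of_norm_bounded (summable_abs_gbinom hα.le) fun n => by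
      simpa using hbound n 1 ⟨zero_le_one, le_rfl⟩
  have h := tendsto_nhds_unique hS_left hAbel
  simp only [S, Complex.ofReal_one, one_mul] at h
  exact h ▸ hsum.hasSum

noncomputable def fracDiff (α h : ℝ) (g : ℝ → ℝ) (x : ℝ) : ℝ :=
  ∑' ν : ℕ, (-1 : ℝ) ^ ν * gbinom α ν * g (x + (α - ν) * h)

lemma fracDiff1_fracDiff2_mul (α₁ α₂ h₁ h₂ : ℝ) (F G : ℝ → ℝ) :
    fracDiff1 α₁ h₁ (fracDiff2 α₂ h₂ fun x₁ x₂ => F x₁ * G x₂)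
      = fun x₁ x₂ => fracDiff α₁ h₁ F x₁ * fracDiff α₂ h₂ G x₂ := by
  ext x₁ x₂
  simp only [fracDiff1, fracDiff2, fracDiff]
  rw [← tsum_mul_right]
  refine tsum_congr fun ν => ?_
  rw [← tsum_mul_left, ← tsum_mul_left]
  exact tsum_congr fun μ => by ring

/- `Δ^α_h e^{iy} = fracDiffSymbol α h * e^{iy}`, by the binomial series at `z = -e^{-ih}`. -/
noncomputable def fracDiffSymbol (α h : ℝ) : ℂ :=
  Complex.exp (↑(α * h) * Complex.I) * (1 - Complex.exp (↑(-h) * Complex.I)) ^ (α : ℂ)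

lemma fracDiff_sin {α : ℝ} (hα : 0 < α) (h x : ℝ) :
    fracDiff α h sin x = (Complex.exp (x * Complex.I) * fracDiffSymbol α h).im := by
  have hz : ‖-Complex.exp (↑(-h) * Complex.I)‖ = 1 := by
    rw [norm_neg, Complex.norm_exp_ofReal_mul_I]
  have hsum := Complex.hasSum_im <| (hasSum_gbinom_mul_pow hα hz.le).mul_left
    (Complex.exp (x * Complex.I) * Complex.exp (↑(α * h) * Complex.I))
  rw [fracDiffSymbol, sub_eq_add_neg, ← mul_assoc, ← hsum.tsum_eq, fracDiff]
  refine tsum_congr fun ν => ?_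
  have hexp : Complex.exp (↑(x + (α - ν) * h) * Complex.I) = Complex.exp (x * Complex.I) *
      Complex.exp (↑(α * h) * Complex.I) * Complex.exp (↑(-h) * Complex.I) ^ ν := by
    rw [← Complex.exp_nat_mul, ← Complex.exp_add, ← Complex.exp_add]
    push_cast
    ring_nf
  have hterm : Complex.exp (x * Complex.I) * Complex.exp (↑(α * h) * Complex.I) *
      (gbinom α ν * (-Complex.exp (↑(-h) * Complex.I)) ^ ν)
      = ↑((-1) ^ ν * gbinom α ν) * Complex.exp (↑(x + (α - ν) * h) * Complex.I) := by
    rw [hexp, neg_pow (Complex.exp _)]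
    push_cast
    ring
  rw [hterm, Complex.im_ofReal_mul, Complex.exp_ofReal_mul_I_im]

lemma norm_fracDiffSymbol (α h : ℝ) :
    ‖fracDiffSymbol α h‖ = ‖1 - Complex.exp (↑(-h) * Complex.I)‖ ^ α := by
  rw [fracDiffSymbol, norm_mul, Complex.norm_exp_ofReal_mul_I, one_mul, Complex.norm_cpow_real]

lemma norm_fracDiffSymbol_le {α : ℝ} (hα : 0 ≤ α) (h : ℝ) : ‖fracDiffSymbol α h‖ ≤ |h| ^ α := by
  rw [norm_fracDiffSymbol]
  refine Real.rpow_le_rpow (norm_nonneg _) ?_ hα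
  rw [norm_sub_rev, mul_comm]
  simpa using Real.norm_exp_I_mul_ofReal_sub_one_le (x := -h)

lemma mul_rpow_le_norm_fracDiffSymbol {α : ℝ} (hα : 0 ≤ α) {h : ℝ} (h₀ : 0 ≤ h)
    (h₁ : h ≤ π / 2) : (2 / π * h) ^ α ≤ ‖fracDiffSymbol α h‖ := by
  rw [norm_fracDiffSymbol]
  refine Real.rpow_le_rpow (by positivity) ?_ hα
  have him : (1 - Complex.exp (↑(-h) * Complex.I)).im = sin h := by
    rw [Complex.sub_im, Complex.one_im, Complex.exp_ofReal_mul_I_im, Real.sin_neg, zero_sub,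
      neg_neg]
  calc 2 / π * h ≤ sin h := Real.mul_le_sin h₀ h₁
    _ ≤ ‖1 - Complex.exp (↑(-h) * Complex.I)‖ :=
      him ▸ (le_abs_self _).trans (Complex.abs_im_le_norm _)

noncomputable abbrev periodMeasure : Measure ℝ := volume.restrict (Set.Ioc 0 (2 * π))

lemma periodMeasure_univ : periodMeasure Set.univ = ENNReal.ofReal (2 * π) := by
  rw [Measure.restrict_apply_univ, Real.volume_Ioc, sub_zero]

lemma im_exp_mul (y : ℝ) (W : ℂ) :
    (Complex.exp (y * Complex.I) * W).im = W.re * sin y + W.im * cos y := by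
  rw [Complex.mul_im, Complex.exp_ofReal_mul_I_re, Complex.exp_ofReal_mul_I_im]
  ring

lemma continuous_im_exp_mul (W : ℂ) :
    Continuous fun y : ℝ => (Complex.exp (y * Complex.I) * W).im := by
  simp only [im_exp_mul]
  fun_prop

lemma abs_im_exp_mul_le (y : ℝ) (W : ℂ) : |(Complex.exp (y * Complex.I) * W).im| ≤ ‖W‖ :=
  (Complex.abs_im_le_norm _).trans_eq (by rw [norm_mul, Complex.norm_exp_ofReal_mul_I, one_mul])

lemma integral_im_exp_mul_sq (W : ℂ) :
    ∫ y in (0)..(2 * π), (Complex.exp (y * Complex.I) * W).im ^ 2 = π * ‖W‖ ^ 2 := by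
  have hexpand : ∀ y : ℝ, (Complex.exp (y * Complex.I) * W).im ^ 2
      = W.re ^ 2 * sin y ^ 2 + W.im ^ 2 * cos y ^ 2 + 2 * W.re * W.im * (sin y * cos y) := by
    intro y; rw [im_exp_mul]; ring
  simp_rw [hexpand]
  have hint : ∀ f : ℝ → ℝ, Continuous f → IntervalIntegrable f volume 0 (2 * π) :=
    fun f hf => hf.intervalIntegrable _ _
  rw [intervalIntegral.integral_add (hint _ (by fun_prop)) (hint _ (by fun_prop)),
    intervalIntegral.integral_add (hint _ (by fun_prop)) (hint _ (by fun_prop)),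
    intervalIntegral.integral_const_mul,
    intervalIntegral.integral_const_mul, intervalIntegral.integral_const_mul, integral_sin_sq,
    integral_cos_sq, integral_sin_mul_cos₁, Complex.sq_norm, Complex.normSq_apply]
  simp only [sin_two_pi, cos_two_pi, sin_zero, cos_zero]
  ring

lemma mul_norm_le_integral_abs_im_exp_mul (W : ℂ) :
    π * ‖W‖ ≤ ∫ y in (0)..(2 * π), |(Complex.exp (y * Complex.I) * W).im| := by
  have hcont := continuous_im_exp_mul W
  have hsq : π * ‖W‖ ^ 2 ≤ ‖W‖ * ∫ y in (0)..(2 * π), |(Complex.exp (y * Complex.I) * W).im| := by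
    rw [← integral_im_exp_mul_sq, ← intervalIntegral.integral_const_mul]
    refine intervalIntegral.integral_mono_on (by positivity)
      ((hcont.pow 2).intervalIntegrable _ _) ((hcont.abs.const_mul _).intervalIntegrable _ _)
      fun y _ => ?_
    rw [← sq_abs, sq]
    exact mul_le_mul_of_nonneg_right (abs_im_exp_mul_le y W) (abs_nonneg _)
  rcases (norm_nonneg W).eq_or_lt with hW | hW
  · rw [← hW, mul_zero]
    exact intervalIntegral.integral_nonneg (by positivity) fun y _ => abs_nonneg _
  · exact le_of_mul_le_mul_left (by linarith) hW

lemma eLpNorm_im_exp_mul_le (p : ℝ≥0∞) (W : ℂ) :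
    eLpNorm (fun y : ℝ => (Complex.exp (y * Complex.I) * W).im) p periodMeasure
      ≤ ENNReal.ofReal ((2 * π) ^ p.toReal⁻¹ * ‖W‖) := by
  refine (eLpNorm_le_of_ae_bound (C := ‖W‖) (ae_of_all _ fun y => ?_)).trans_eq ?_
  · exact abs_im_exp_mul_le y W
  · rw [periodMeasure_univ, ENNReal.ofReal_rpow_of_nonneg (by positivity) (by positivity),
      ← ENNReal.ofReal_mul (by positivity)]

lemma le_eLpNorm_im_exp_mul {p : ℝ≥0∞} (hp : 1 ≤ p) (W : ℂ) :
    ENNReal.ofReal (π / (2 * π) ^ (1 - p.toReal⁻¹) * ‖W‖)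
      ≤ eLpNorm (fun y : ℝ => (Complex.exp (y * Complex.I) * W).im) p periodMeasure := by
  have hcont := continuous_im_exp_mul W
  have hexp : 0 ≤ 1 - p.toReal⁻¹ := by
    rcases eq_or_ne p ∞ with rfl | hp_top
    · simp
    · exact sub_nonneg.2 (inv_le_one_of_one_le₀ (ENNReal.toReal_mono hp_top hp))
  have hL1 : ENNReal.ofReal (π * ‖W‖) ≤
      eLpNorm (fun y : ℝ => (Complex.exp (y * Complex.I) * W).im) 1 periodMeasure := by
    rw [eLpNorm_one_eq_lintegral_enorm, ← ofReal_integral_norm_eq_lintegral_enorm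
      hcont.integrableOn_Ioc, ← intervalIntegral.integral_of_le (by positivity)]
    exact ENNReal.ofReal_le_ofReal (mul_norm_le_integral_abs_im_exp_mul W)
  have hHolder := eLpNorm_le_eLpNorm_mul_rpow_measure_univ hp hcont.aestronglyMeasurable
    (μ := periodMeasure)
  rw [periodMeasure_univ, ENNReal.toReal_one, div_one, one_div,
    ENNReal.ofReal_rpow_of_nonneg (by positivity) hexp] at hHolder
  rw [div_mul_eq_mul_div, ENNReal.ofReal_div_of_pos (by positivity)]
  exact ENNReal.div_le_of_le_mul (hL1.trans hHolder)

lemma exists_eLpNorm_fracDiff_sin_le {α : ℝ} (hα : 0 < α) (p : ℝ≥0∞) :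
    ∃ C > 0, ∀ h, eLpNorm (fracDiff α h sin) p periodMeasure ≤ ENNReal.ofReal (C * |h| ^ α) := by
  refine ⟨(2 * π) ^ p.toReal⁻¹, by positivity, fun h => ?_⟩
  rw [funext (fracDiff_sin hα h)]
  refine (eLpNorm_im_exp_mul_le p _).trans (ENNReal.ofReal_le_ofReal ?_)
  gcongr
  exact norm_fracDiffSymbol_le hα.le h

lemma exists_le_eLpNorm_fracDiff_sin {α : ℝ} (hα : 0 < α) {p : ℝ≥0∞} (hp : 1 ≤ p) :
    ∃ c > 0, ∀ h, 0 ≤ h → h ≤ π / 2 →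
      ENNReal.ofReal (c * h ^ α) ≤ eLpNorm (fracDiff α h sin) p periodMeasure := by
  refine ⟨π / (2 * π) ^ (1 - p.toReal⁻¹) * (2 / π) ^ α, by positivity, fun h h₀ h₁ => ?_⟩
  rw [funext (fracDiff_sin hα h)]
  refine le_trans (ENNReal.ofReal_le_ofReal ?_) (le_eLpNorm_im_exp_mul hp _)
  rw [mul_assoc, ← Real.mul_rpow (by positivity) h₀]
  gcongr
  exact mul_rpow_le_norm_fracDiffSymbol hα.le h₀ h₁

lemma mixedNorm_mul {p₁ : ℝ≥0∞} (p₂ : ℝ≥0∞) {F : ℝ → ℝ} (hF : eLpNorm F p₁ periodMeasure ≠ ∞)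
    (G : ℝ → ℝ) :
    mixedNorm p₁ p₂ (fun x₁ x₂ => F x₁ * G x₂)
      = eLpNorm F p₁ periodMeasure * eLpNorm G p₂ periodMeasure := by
  have hinner : ∀ x₂, (eLpNorm (fun x₁ => F x₁ * G x₂) p₁ periodMeasure).toReal
      = (eLpNorm F p₁ periodMeasure).toReal * ‖G x₂‖ := by
    intro x₂
    rw [show (fun x₁ => F x₁ * G x₂) = G x₂ • F from funext fun x₁ => mul_comm _ _,
      eLpNorm_const_smul, ENNReal.toReal_mul, toReal_enorm, mul_comm]
  have houter : (fun x₂ => (eLpNorm F p₁ periodMeasure).toReal * ‖G x₂‖)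
      = (eLpNorm F p₁ periodMeasure).toReal • fun x₂ => ‖G x₂‖ := rfl
  simp only [mixedNorm, hinner]
  rw [houter, eLpNorm_const_smul, eLpNorm_norm, Real.enorm_of_nonneg ENNReal.toReal_nonneg,
    ENNReal.ofReal_toReal hF]

lemma mixedNorm_fracDiff_sin_mul_sin {α₁ : ℝ} (hα₁ : 0 < α₁) (α₂ : ℝ) (p₁ p₂ : ℝ≥0∞)
    (h₁ h₂ : ℝ) :
    mixedNorm p₁ p₂ (fracDiff1 α₁ h₁ (fracDiff2 α₂ h₂ fun x₁ x₂ => sin x₁ * sin x₂))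
      = eLpNorm (fracDiff α₁ h₁ sin) p₁ periodMeasure
        * eLpNorm (fracDiff α₂ h₂ sin) p₂ periodMeasure := by
  obtain ⟨C, -, hC⟩ := exists_eLpNorm_fracDiff_sin_le hα₁ p₁
  rw [fracDiff1_fracDiff2_mul, mixedNorm_mul p₂ ((hC h₁).trans_lt ENNReal.ofReal_lt_top).ne]

/-- The mixed modulus of smoothness of `sin x₁ sin x₂` has exact order
`δ₁^{r₁} δ₂^{r₂}`. -/
theorem mixedModulus_sin_sin (r₁ r₂ : ℝ) (hr₁ : 0 < r₁) (hr₂ : 0 < r₂)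
    (p₁ p₂ : ℝ≥0∞) (hp₁ : 1 ≤ p₁) (hp₂ : 1 ≤ p₂) :
    ∃ c C : ℝ, 0 < c ∧ 0 < C ∧ ∀ δ₁ δ₂ : ℝ, 0 < δ₁ → δ₁ < 1 → 0 < δ₂ → δ₂ < 1 →
      ENNReal.ofReal (c * δ₁ ^ r₁ * δ₂ ^ r₂) ≤
        mixedModulus r₁ r₂ (fun x₁ x₂ => Real.sin x₁ * Real.sin x₂) δ₁ δ₂ p₁ p₂ ∧
      mixedModulus r₁ r₂ (fun x₁ x₂ => Real.sin x₁ * Real.sin x₂) δ₁ δ₂ p₁ p₂ ≤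
        ENNReal.ofReal (C * δ₁ ^ r₁ * δ₂ ^ r₂) := by
  obtain ⟨c₁, hc₁, lower₁⟩ := exists_le_eLpNorm_fracDiff_sin hr₁ hp₁
  obtain ⟨c₂, hc₂, lower₂⟩ := exists_le_eLpNorm_fracDiff_sin hr₂ hp₂
  obtain ⟨C₁, hC₁, upper₁⟩ := exists_eLpNorm_fracDiff_sin_le hr₁ p₁
  obtain ⟨C₂, hC₂, upper₂⟩ := exists_eLpNorm_fracDiff_sin_le hr₂ p₂
  refine ⟨c₁ * c₂, C₁ * C₂, by positivity, by positivity, fun δ₁ δ₂ hδ₁ hδ₁' hδ₂ hδ₂' => ⟨?_, ?_⟩⟩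
  · have hπ : 1 < π / 2 := by linarith [pi_gt_three]
    refine le_trans ?_ <| le_iSup₂_of_le δ₁ (abs_of_pos hδ₁).le <|
      le_iSup₂_of_le δ₂ (abs_of_pos hδ₂).le le_rfl
    rw [mixedNorm_fracDiff_sin_mul_sin hr₁, show c₁ * c₂ * δ₁ ^ r₁ * δ₂ ^ r₂
      = c₁ * δ₁ ^ r₁ * (c₂ * δ₂ ^ r₂) by ring, ENNReal.ofReal_mul (by positivity)]
    exact mul_le_mul' (lower₁ δ₁ hδ₁.le (by linarith)) (lower₂ δ₂ hδ₂.le (by linarith))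
  · refine iSup₂_le fun h₁ hh₁ => iSup₂_le fun h₂ hh₂ => ?_
    rw [mixedNorm_fracDiff_sin_mul_sin hr₁, show C₁ * C₂ * δ₁ ^ r₁ * δ₂ ^ r₂
      = C₁ * δ₁ ^ r₁ * (C₂ * δ₂ ^ r₂) by ring, ENNReal.ofReal_mul (by positivity)]
    refine mul_le_mul' ((upper₁ h₁).trans ?_) ((upper₂ h₂).trans ?_) <;>
      gcongr
end
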